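/- arXiv:0711.4190 — 2 statements merged into one kernel-verified Lean document; each statement's English description precedes it below -/
import Mathlib

section
/- Let m ≥ 1 be an integer, let a < b be reals, and let φ : [a,b] → ℝ be C^m and real valued with |φ^{(m)}(x)| ≥ c_m > 0 for all x ∈ (a,b); if m = 1 assume in addition that φ' is monotonic on (a,b). Let ψ : [a,b] → ℂ be C¹. Then for every μ > 0, |∫_a^b e^{iμφ(x)} ψ(x) dx| ≤ C_m (c_m μ)^{-1/m} [ min{|ψ(a)|, |ψ(b)|} + ∫_a^b |ψ'(x)| dx ], where C_m = 5·2^{m−1} − 2. -/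
/-!
Induction on `m`. For `m = 1` and `φ' ≥ c`, write `e^{iφ} = (iφ')⁻¹ (e^{iφ})'` and integrate by
parts: since `1 / φ'` is monotone with values in `(0, 1/c]`, the boundary terms and the total
variation of `1 / φ'` add up to at most `2 / c`. (A merely `C¹` phase is first replaced by its
averages over `[x, x + ε]`, whose derivatives are again `≥ c` and monotone.) For `m ≥ 2`,
`φ⁽ᵐ⁾` has constant sign by continuity, and conjugating the integral flips it. If `φ⁽ᵐ⁾ ≥ c`,
then `φ⁽ᵐ⁻¹⁾` is increasing with slope `≥ c`, so `|φ⁽ᵐ⁻¹⁾| < δ` only on an interval of length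
`≤ 2δ / c`; the case `m - 1` applies on the two remaining intervals, and `δ = c ^ ((m - 1) / m)`
gives the recursion `C_m = 2 C_{m-1} + 2`. Finally the amplitude `ψ` is handled by integrating
by parts against a primitive of `e^{iμφ}`, which the amplitude-free estimate bounds on every
subinterval.
-/

open Set Filter Topology MeasureTheory intervalIntegral

lemma monotoneOn_Icc_of_monotoneOn_Ioo {f : ℝ → ℝ} {a b : ℝ} (hf : ContinuousOn f (Icc a b))
    (h : MonotoneOn f (Ioo a b)) : MonotoneOn f (Icc a b) := by
  intro x hx y hy hxy
  rcases hxy.eq_or_lt with rfl | hlt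
  · rfl
  obtain ⟨t, hxt, hty⟩ := exists_between hlt
  have hat : a < t := hx.1.trans_lt hxt
  have htb : t < b := hty.trans_le hy.2
  have ht : t ∈ Ioo a b := ⟨hat, htb⟩
  have hfxt : f x ≤ f t := by
    refine le_on_closure (s := Ioo a t) (fun z hz => h ⟨hz.1, hz.2.trans htb⟩ ht hz.2.le)
      (hf.mono ?_) continuousOn_const ?_
    · rw [closure_Ioo hat.ne]; exact Icc_subset_Icc_right htb.le
    · rw [closure_Ioo hat.ne]; exact ⟨hx.1, hxt.le⟩
  have hfty : f t ≤ f y := by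
    refine le_on_closure (s := Ioo t b) (fun z hz => h ht ⟨hat.trans hz.1, hz.2⟩ hz.1.le)
      continuousOn_const (hf.mono ?_) ?_
    · rw [closure_Ioo htb.ne]; exact Icc_subset_Icc_left hat.le
    · rw [closure_Ioo htb.ne]; exact ⟨hty.le, hy.2⟩
  exact hfxt.trans hfty

lemma antitoneOn_Icc_of_antitoneOn_Ioo {f : ℝ → ℝ} {a b : ℝ} (hf : ContinuousOn f (Icc a b))
    (h : AntitoneOn f (Ioo a b)) : AntitoneOn f (Icc a b) := by
  simpa using (monotoneOn_Icc_of_monotoneOn_Ioo hf.neg h.neg).neg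

lemma mul_sub_le_image_sub_of_le_hasDerivAt {F F' : ℝ → ℝ} {a b c : ℝ}
    (hF : ContinuousOn F (Icc a b)) (hF' : ∀ x ∈ Ioo a b, HasDerivAt F (F' x) x)
    (hc : ∀ x ∈ Ioo a b, c ≤ F' x) :
    ∀ x ∈ Icc a b, ∀ y ∈ Icc a b, x ≤ y → c * (y - x) ≤ F y - F x := by
  refine (convex_Icc a b).mul_sub_le_image_sub_of_le_deriv hF ?_ ?_ <;> rw [interior_Icc]
  · exact fun x hx => (hF' x hx).differentiableAt.differentiableWithinAt
  · exact fun x hx => (hF' x hx).deriv ▸ hc x hx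

lemma forall_le_or_forall_le_neg_of_le_abs {g : ℝ → ℝ} {s : Set ℝ} {c : ℝ}
    (hs : IsPreconnected s) (hg : ContinuousOn g s) (hc : 0 < c) (h : ∀ x ∈ s, c ≤ |g x|) :
    (∀ x ∈ s, c ≤ g x) ∨ ∀ x ∈ s, c ≤ -g x := by
  by_contra! ⟨⟨u, hu, hgu⟩, v, hv, hgv⟩
  have hu' : g u ≤ 0 := by cases abs_cases (g u) <;> linarith [h u hu]
  have hv' : 0 ≤ g v := by cases abs_cases (g v) <;> linarith [h v hv]
  obtain ⟨w, hw, hgw⟩ := hs.intermediate_value hu hv hg ⟨hu', hv'⟩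
  have := h w hw
  rw [hgw, abs_zero] at this
  linarith

lemma MonotoneOn.exists_crossing {F : ℝ → ℝ} {a b : ℝ} (hmono : MonotoneOn F (Icc a b))
    (hab : a ≤ b) (hF : ContinuousOn F (Icc a b)) (y : ℝ) :
    ∃ p ∈ Icc a b, (∀ x ∈ Ioc a p, F x ≤ y) ∧ ∀ x ∈ Ico p b, y ≤ F x := by
  by_cases ha : y ≤ F a
  · exact ⟨a, left_mem_Icc.2 hab, fun x hx => absurd hx.2 (not_le.2 hx.1),
      fun x hx => ha.trans (hmono (left_mem_Icc.2 hab) ⟨hx.1, hx.2.le⟩ hx.1)⟩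
  by_cases hb : F b ≤ y
  · exact ⟨b, right_mem_Icc.2 hab,
      fun x hx => (hmono ⟨hx.1.le, hx.2⟩ (right_mem_Icc.2 hab) hx.2).trans hb,
      fun x hx => absurd hx.2 (not_lt.2 hx.1)⟩
  obtain ⟨p, hp, rfl⟩ := intermediate_value_Icc hab hF ⟨(not_le.1 ha).le, (not_le.1 hb).le⟩
  exact ⟨p, hp, fun x hx => hmono ⟨hx.1.le, hx.2.trans hp.2⟩ hp hx.2,
    fun x hx => hmono hp ⟨hp.1.trans hx.1, hx.2.le⟩ hx.1⟩

lemma exists_sublevel_interval {F F' : ℝ → ℝ} {a b c δ : ℝ} (hab : a ≤ b) (hc : 0 < c)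
    (hδ : 0 < δ) (hF : ContinuousOn F (Icc a b)) (hF' : ∀ x ∈ Ioo a b, HasDerivAt F (F' x) x)
    (hcF : ∀ x ∈ Ioo a b, c ≤ F' x) :
    ∃ p q, a ≤ p ∧ p ≤ q ∧ q ≤ b ∧ c * (q - p) ≤ 2 * δ ∧
      (∀ x ∈ Ioo a p, δ ≤ |F x|) ∧ ∀ x ∈ Ioo q b, δ ≤ |F x| := by
  have hslope := mul_sub_le_image_sub_of_le_hasDerivAt hF hF' hcF
  have hmono : MonotoneOn F (Icc a b) := fun x hx y hy hxy =>
    sub_nonneg.1 ((mul_nonneg hc.le (sub_nonneg.2 hxy)).trans (hslope x hx y hy hxy))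
  obtain ⟨p, hp, hpl, hpr⟩ := hmono.exists_crossing hab hF (-δ)
  obtain ⟨q, hq, hql, hqr⟩ := hmono.exists_crossing hab hF δ
  have hpq : p ≤ q := by
    by_contra! hqp
    have h1 := hqr q ⟨le_rfl, hqp.trans_le hp.2⟩
    have h2 := hpl p ⟨hq.1.trans_lt hqp, le_rfl⟩
    linarith [hmono hq hp hqp.le]
  refine ⟨p, q, hp.1, hpq, hq.2, ?_, fun x hx => ?_, fun x hx => ?_⟩
  · rcases hpq.eq_or_lt with rfl | hlt
    · linarith
    have h1 := hpr p ⟨le_rfl, hlt.trans_le hq.2⟩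
    have h2 := hql q ⟨hp.1.trans_lt hlt, le_rfl⟩
    linarith [hslope p hp q hq hlt.le]
  · exact le_abs.2 (Or.inr (by linarith [hpl x ⟨hx.1, hx.2.le⟩]))
  · exact le_abs.2 (Or.inl (hqr x ⟨hx.1.le, hx.2⟩))

lemma norm_integral_le_add_add {E : Type*} [NormedAddCommGroup E] [NormedSpace ℝ E]
    {f : ℝ → E} {a p q b A B D : ℝ} (hf : ContinuousOn f (Icc a b)) (hap : a ≤ p) (hpq : p ≤ q)
    (hqb : q ≤ b) (h₁ : ‖∫ x in a..p, f x‖ ≤ A) (h₂ : ‖∫ x in p..q, f x‖ ≤ B)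
    (h₃ : ‖∫ x in q..b, f x‖ ≤ D) :
    ‖∫ x in a..b, f x‖ ≤ A + B + D := by
  have hint : ∀ u ∈ Icc a b, ∀ v ∈ Icc a b, IntervalIntegrable f volume u v := fun u hu v hv =>
    (hf.mono (uIcc_subset_Icc hu hv)).intervalIntegrable
  have ha : a ∈ Icc a b := ⟨le_rfl, hap.trans (hpq.trans hqb)⟩
  have hb : b ∈ Icc a b := ⟨hap.trans (hpq.trans hqb), le_rfl⟩
  have hp : p ∈ Icc a b := ⟨hap, hpq.trans hqb⟩
  have hq : q ∈ Icc a b := ⟨hap.trans hpq, hqb⟩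
  rw [← integral_add_adjacent_intervals (hint a ha p hp) (hint p hp b hb),
    ← integral_add_adjacent_intervals (hint p hp q hq) (hint q hq b hb)]
  linarith [norm_add_le (∫ x in a..p, f x) ((∫ x in p..q, f x) + ∫ x in q..b, f x),
    norm_add_le (∫ x in p..q, f x) (∫ x in q..b, f x)]

lemma norm_integral_cexp_I_mul_neg (φ : ℝ → ℝ) (a b : ℝ) :
    ‖∫ x in a..b, Complex.exp (Complex.I * ↑(-φ x))‖ =
      ‖∫ x in a..b, Complex.exp (Complex.I * ↑(φ x))‖ := by
  have hconj : ∀ x, Complex.exp (Complex.I * ↑(-φ x)) =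
      (starRingEnd ℂ) (Complex.exp (Complex.I * ↑(φ x))) := fun x => by
    rw [← Complex.exp_conj, map_mul, Complex.conj_I, Complex.conj_ofReal]
    push_cast; ring_nf
  simp only [hconj, intervalIntegral, integral_conj, ← map_sub, Complex.norm_conj]

lemma integral_abs_eq_abs_sub_of_hasDerivAt {h h' : ℝ → ℝ} {a b : ℝ} (hab : a ≤ b)
    (hh : ∀ x, HasDerivAt h (h' x) x) (hh' : Continuous h')
    (hsign : (∀ x, 0 ≤ h' x) ∨ ∀ x, h' x ≤ 0) :
    ∫ x in a..b, |h' x| = |h b - h a| := by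
  have hftc : ∫ x in a..b, h' x = h b - h a :=
    integral_eq_sub_of_hasDerivAt (fun x _ => hh x) (hh'.intervalIntegrable a b)
  rcases hsign with hpos | hneg
  · have hnn : 0 ≤ ∫ x in a..b, h' x := integral_nonneg hab fun x _ => hpos x
    simp only [abs_of_nonneg (hpos _)]
    rw [hftc, abs_of_nonneg (hftc ▸ hnn)]
  · have hnn : 0 ≤ ∫ x in a..b, -h' x := integral_nonneg hab fun x _ => neg_nonneg.2 (hneg x)
    simp only [abs_of_nonpos (hneg _)]
    rw [intervalIntegral.integral_neg, hftc] at hnn ⊢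
    rw [abs_of_nonpos (neg_nonneg.1 hnn)]

lemma norm_integral_cexp_le_of_hasDerivAt {Φ G h' : ℝ → ℝ} {a b : ℝ} (hab : a ≤ b)
    (hΦ : ∀ x, HasDerivAt Φ (G x) x) (hG : Continuous G) (hG0 : ∀ x, 0 < G x)
    (hh : ∀ x, HasDerivAt (fun y => (G y)⁻¹) (h' x) x) (hh' : Continuous h') :
    ‖∫ x in a..b, Complex.exp (Complex.I * Φ x)‖ ≤
      (G a)⁻¹ + (G b)⁻¹ + ∫ x in a..b, |h' x| := by
  set u : ℝ → ℂ := fun x => Complex.exp (Complex.I * Φ x)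
  set v : ℝ → ℂ := fun x => -Complex.I * ((G x)⁻¹ : ℝ)
  have hu : ∀ x, HasDerivAt u (u x * (Complex.I * G x)) x := fun x =>
    ((hΦ x).ofReal_comp.const_mul Complex.I).cexp
  have hv : ∀ x, HasDerivAt v (-Complex.I * h' x) x := fun x =>
    (hh x).ofReal_comp.const_mul _
  have hnu : ∀ x, ‖u x‖ = 1 := fun x => Complex.norm_exp_I_mul_ofReal _
  have hnv : ∀ x, ‖v x‖ = (G x)⁻¹ := fun x => by
    simp [v, abs_of_pos (hG0 x)]
  have hvu : ∀ x, v x * (u x * (Complex.I * G x)) = u x := fun x => by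
    have : (G x : ℂ) ≠ 0 := Complex.ofReal_ne_zero.2 (hG0 x).ne'
    simp only [v, Complex.ofReal_inv]
    field_simp
    rw [Complex.I_sq]
    ring
  have hparts := integral_mul_deriv_eq_deriv_mul (a := a) (b := b) (fun x _ => hv x)
    (fun x _ => hu x)
    ((by fun_prop : Continuous fun x => -Complex.I * h' x).intervalIntegrable _ _)
    (((continuous_iff_continuousAt.2 fun x => (hu x).continuousAt).mul
      (by fun_prop)).intervalIntegrable _ _)
  simp only [hvu] at hparts
  rw [hparts]
  have hrest : ‖∫ x in a..b, -Complex.I * h' x * u x‖ ≤ ∫ x in a..b, |h' x| :=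
    (intervalIntegral.norm_integral_le_integral_norm hab).trans_eq
      (integral_congr fun x _ => by simp [hnu])
  calc _ ≤ ‖v b * u b‖ + ‖v a * u a‖ + ‖∫ x in a..b, -Complex.I * h' x * u x‖ :=
        norm_sub_le_of_le (norm_sub_le _ _) le_rfl
    _ ≤ _ := by simp only [norm_mul, hnu, hnv, mul_one]; linarith

lemma norm_integral_cexp_le_of_le_deriv_of_hasDerivAt_deriv {Φ G G' : ℝ → ℝ} {a b c : ℝ}
    (hab : a ≤ b) (hc : 0 < c) (hΦ : ∀ x, HasDerivAt Φ (G x) x) (hG : ∀ x, HasDerivAt G (G' x) x)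
    (hG' : Continuous G') (hcG : ∀ x, c ≤ G x) (hsign : (∀ x, 0 ≤ G' x) ∨ ∀ x, G' x ≤ 0) :
    ‖∫ x in a..b, Complex.exp (Complex.I * Φ x)‖ ≤ 2 / c := by
  have hG0 : ∀ x, 0 < G x := fun x => hc.trans_le (hcG x)
  have hGc : Continuous G := continuous_iff_continuousAt.2 fun x => (hG x).continuousAt
  have hh : ∀ x, HasDerivAt (fun y => (G y)⁻¹) (-G' x / G x ^ 2) x := fun x =>
    (hG x).inv (hG0 x).ne'
  have hvar := integral_abs_eq_abs_sub_of_hasDerivAt hab hh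
    (hG'.neg.div (hGc.pow 2) fun x => pow_ne_zero 2 (hG0 x).ne')
    (hsign.symm.imp (fun h x => div_nonneg (neg_nonneg.2 (h x)) (sq_nonneg _))
      fun h x => div_nonpos_of_nonpos_of_nonneg (neg_nonpos.2 (h x)) (sq_nonneg _))
  refine (norm_integral_cexp_le_of_hasDerivAt hab hΦ hGc hG0 hh
    (hG'.neg.div (hGc.pow 2) fun x => pow_ne_zero 2 (hG0 x).ne')).trans ?_
  have ha : (G a)⁻¹ ≤ c⁻¹ := inv_anti₀ hc (hcG a)
  have hb : (G b)⁻¹ ≤ c⁻¹ := inv_anti₀ hc (hcG b)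
  rw [hvar, div_eq_mul_inv]
  cases abs_cases ((G b)⁻¹ - (G a)⁻¹) <;> linarith

lemma hasDerivAt_forwardDifference {F F' : ℝ → ℝ} (hF : ∀ x, HasDerivAt F (F' x) x) (ε x : ℝ) :
    HasDerivAt (fun y => ε⁻¹ * (F (y + ε) - F y)) (ε⁻¹ * (F' (x + ε) - F' x)) x :=
  (((hF (x + ε)).comp_add_const x ε).sub (hF x)).const_mul ε⁻¹

lemma norm_integral_cexp_le_of_le_deriv_of_monotone {φ g : ℝ → ℝ} {a b c : ℝ} (hab : a ≤ b)
    (hc : 0 < c) (hφ : ∀ x, HasDerivAt φ (g x) x) (hg : Continuous g) (hcg : ∀ x, c ≤ g x)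
    (hmono : Monotone g ∨ Antitone g) :
    ‖∫ x in a..b, Complex.exp (Complex.I * φ x)‖ ≤ 2 / c := by
  have hφc : Continuous φ := continuous_iff_continuousAt.2 fun x => (hφ x).continuousAt
  have hK : ∀ x, HasDerivAt (fun y => ∫ t in 0..y, φ t) (φ x) x := fun x =>
    hφc.integral_hasStrictDerivAt 0 x |>.hasDerivAt
  set Φ : ℝ → ℝ → ℝ := fun ε x => ε⁻¹ * ((∫ t in 0..x + ε, φ t) - ∫ t in 0..x, φ t)
  have hbound : ∀ ε > 0, ‖∫ x in a..b, Complex.exp (Complex.I * Φ ε x)‖ ≤ 2 / c := by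
    intro ε hε
    refine norm_integral_cexp_le_of_le_deriv_of_hasDerivAt_deriv hab hc
      (hasDerivAt_forwardDifference hK ε) (hasDerivAt_forwardDifference hφ ε) (by fun_prop)
      (fun x => ?_) ?_
    · have := mul_sub_le_image_sub_of_le_deriv (fun x => (hφ x).differentiableAt)
        (fun x => (hφ x).deriv ▸ hcg x) (le_add_of_nonneg_right hε.le) (x := x)
      rw [le_inv_mul_iff₀ hε]
      linarith
    · refine hmono.imp (fun h x => ?_) (fun h x => ?_)
      · exact mul_nonneg (inv_nonneg.2 hε.le) (sub_nonneg.2 (h (by linarith)))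
      · exact mul_nonpos_of_nonneg_of_nonpos (inv_nonneg.2 hε.le) (sub_nonpos.2 (h (by linarith)))
  have hlim : Tendsto (fun ε => ∫ x in a..b, Complex.exp (Complex.I * Φ ε x)) (𝓝[>] 0)
      (𝓝 (∫ x in a..b, Complex.exp (Complex.I * φ x))) := by
    refine tendsto_integral_filter_of_dominated_convergence (fun _ => 1)
      (Eventually.of_forall fun ε => by fun_prop) ?_ intervalIntegrable_const
      (ae_of_all _ fun x _ => ?_)
    · exact Eventually.of_forall fun ε => ae_of_all _ fun x _ =>
        (Complex.norm_exp_I_mul_ofReal _).le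
    · have hslope := (hasDerivAt_iff_tendsto_slope_zero.1 (hK x)).mono_left
        (nhdsWithin_mono _ fun t (ht : 0 < t) => ht.ne')
      exact ((by fun_prop : Continuous fun r : ℝ => Complex.exp (Complex.I * r)).tendsto _).comp
        hslope
  exact le_of_tendsto hlim.norm (eventually_nhdsWithin_of_forall hbound)

lemma norm_integral_cexp_le_of_le_deriv_of_monotoneOn {φ g : ℝ → ℝ} {a b c : ℝ} (hab : a ≤ b)
    (hc : 0 < c) (hφ : ContinuousOn φ (Icc a b)) (hφ' : ∀ x ∈ Ioo a b, HasDerivAt φ (g x) x)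
    (hg : ContinuousOn g (Icc a b)) (hcg : ∀ x ∈ Ioo a b, c ≤ g x)
    (hmono : MonotoneOn g (Ioo a b) ∨ AntitoneOn g (Ioo a b)) :
    ‖∫ x in a..b, Complex.exp (Complex.I * φ x)‖ ≤ 2 / c := by
  rcases hab.eq_or_lt with rfl | hlt
  · simpa using by positivity
  set π : ℝ → ℝ := fun x => projIcc a b hab x
  have hπ : ∀ x, π x ∈ Icc a b := fun x => (projIcc a b hab x).2
  have hπid : ∀ x ∈ Icc a b, π x = x := fun x hx => by simp [π, projIcc_of_mem hab hx]
  have hπm : Monotone π := fun x y h => monotone_projIcc hab h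
  have hgπ : Continuous (g ∘ π) :=
    hg.comp_continuous (continuous_subtype_val.comp continuous_projIcc) hπ
  have hcg' : ∀ x ∈ Icc a b, c ≤ g x := by
    have hcl := closure_Ioo hlt.ne
    exact fun x hx => le_on_closure hcg continuousOn_const (hcl ▸ hg) (hcl ▸ hx)
  have hmono' : Monotone (g ∘ π) ∨ Antitone (g ∘ π) := hmono.imp
    (fun h x y hxy => monotoneOn_Icc_of_monotoneOn_Ioo hg h (hπ x) (hπ y) (hπm hxy))
    (fun h x y hxy => antitoneOn_Icc_of_antitoneOn_Ioo hg h (hπ x) (hπ y) (hπm hxy))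
  have hφπ : ∀ x ∈ Icc a b, φ a + ∫ t in a..x, g (π t) = φ x := fun x hx => by
    rw [integral_eq_sub_of_hasDerivAt_of_le (f' := fun t => g (π t)) hx.1
      (hφ.mono (Icc_subset_Icc_right hx.2)) (fun t ht => by
        rw [hπid t ⟨ht.1.le, ht.2.le.trans hx.2⟩]; exact hφ' t ⟨ht.1, ht.2.trans_le hx.2⟩)
      (hgπ.intervalIntegrable a x)]
    ring
  calc ‖∫ x in a..b, Complex.exp (Complex.I * φ x)‖
      = ‖∫ x in a..b, Complex.exp (Complex.I * ↑(φ a + ∫ t in a..x, g (π t)))‖ := by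
        rw [integral_congr (g := fun x => Complex.exp (Complex.I * ↑(φ a + ∫ t in a..x, g (π t))))
          fun x hx => by simp only [hφπ x (uIcc_of_le hab ▸ hx)]]
    _ ≤ 2 / c := norm_integral_cexp_le_of_le_deriv_of_monotone hab hc
        (fun x => ((hgπ.integral_hasStrictDerivAt a x).hasDerivAt).const_add _) hgπ
        (fun x => hcg' _ (hπ x)) hmono'

/-- `f k` stands for the `k`-th derivative of the phase `f 0`. -/
def VanDerCorputBound (m : ℕ) (C : ℝ) : Prop :=
  ∀ (f : ℕ → ℝ → ℝ) (a b c : ℝ), a ≤ b → 0 < c →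
    (∀ k < m, ∀ x ∈ Icc a b, HasDerivWithinAt (f k) (f (k + 1) x) (Icc a b) x) →
    ContinuousOn (f m) (Icc a b) → (∀ x ∈ Ioo a b, c ≤ |f m x|) →
    (m = 1 → MonotoneOn (f 1) (Ioo a b) ∨ AntitoneOn (f 1) (Ioo a b)) →
    ‖∫ x in a..b, Complex.exp (Complex.I * f 0 x)‖ ≤ C * c ^ (-1 / (m : ℝ))

namespace VanDerCorputBound

variable {m : ℕ} {C : ℝ}

lemma mono {C' : ℝ} (h : VanDerCorputBound m C) (hC : C ≤ C') : VanDerCorputBound m C' :=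
  fun f a b c hab hc hd hcont hlow hmono => (h f a b c hab hc hd hcont hlow hmono).trans
    (mul_le_mul_of_nonneg_right hC (Real.rpow_nonneg hc.le _))

lemma norm_integral_le_of_subset (h : VanDerCorputBound m C) {f : ℕ → ℝ → ℝ} {a b u v c : ℝ}
    (hd : ∀ k < m, ∀ x ∈ Icc a b, HasDerivWithinAt (f k) (f (k + 1) x) (Icc a b) x)
    (hcont : ContinuousOn (f m) (Icc a b))
    (hmono : m = 1 → MonotoneOn (f 1) (Ioo a b) ∨ AntitoneOn (f 1) (Ioo a b))
    (hau : a ≤ u) (huv : u ≤ v) (hvb : v ≤ b) (hc : 0 < c) (hlow : ∀ x ∈ Ioo u v, c ≤ |f m x|) :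
    ‖∫ x in u..v, Complex.exp (Complex.I * f 0 x)‖ ≤ C * c ^ (-1 / (m : ℝ)) := by
  have hsub : Icc u v ⊆ Icc a b := Icc_subset_Icc hau hvb
  have hsub' : Ioo u v ⊆ Ioo a b := Ioo_subset_Ioo hau hvb
  exact h f u v c huv hc (fun k hk x hx => (hd k hk x (hsub hx)).mono hsub) (hcont.mono hsub)
    hlow fun h1 => (hmono h1).imp (·.mono hsub') (·.mono hsub')

lemma norm_integral_le_of_le_deriv {n : ℕ} (h : VanDerCorputBound n C) (hn : 1 ≤ n)
    {f : ℕ → ℝ → ℝ} {a b c : ℝ} (hab : a ≤ b) (hc : 0 < c)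
    (hd : ∀ k < n + 1, ∀ x ∈ Icc a b, HasDerivWithinAt (f k) (f (k + 1) x) (Icc a b) x)
    (hpos : ∀ x ∈ Ioo a b, c ≤ f (n + 1) x) :
    ‖∫ x in a..b, Complex.exp (Complex.I * f 0 x)‖ ≤
      (2 * C + 2) * c ^ (-1 / ((n + 1 : ℕ) : ℝ)) := by
  set s := c ^ (-1 / ((n + 1 : ℕ) : ℝ))
  have hs : 0 < s := Real.rpow_pos_of_pos hc _
  -- the threshold `δ = c * s = c ^ (n / (n + 1))`
  have hδ : 0 < c * s := mul_pos hc hs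
  have hδs : (c * s) ^ (-1 / (n : ℝ)) = s := by
    have hn0 : (n : ℝ) ≠ 0 := Nat.cast_ne_zero.2 (by omega)
    rw [Real.mul_rpow hc.le hs.le, ← Real.rpow_mul hc.le, ← Real.rpow_add hc]
    congr 1
    push_cast
    field_simp
    ring
  have hcont : ∀ k ≤ n, ContinuousOn (f k) (Icc a b) := fun k hk x hx =>
    (hd k (by omega) x hx).continuousWithinAt
  have hF' : ∀ x ∈ Ioo a b, HasDerivAt (f n) (f (n + 1) x) x := fun x hx =>
    (hd n n.lt_succ_self x (Ioo_subset_Icc_self hx)).hasDerivAt (Icc_mem_nhds hx.1 hx.2)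
  have hslope := mul_sub_le_image_sub_of_le_hasDerivAt (hcont n le_rfl) hF' hpos
  have hmonoF : MonotoneOn (f n) (Icc a b) := fun x hx y hy hxy =>
    sub_nonneg.1 ((mul_nonneg hc.le (sub_nonneg.2 hxy)).trans (hslope x hx y hy hxy))
  obtain ⟨p, q, hap, hpq, hqb, hlen, hleft, hright⟩ :=
    exists_sublevel_interval hab hc hδ (hcont n le_rfl) hF' hpos
  have hpiece : ∀ u v, a ≤ u → u ≤ v → v ≤ b → (∀ x ∈ Ioo u v, c * s ≤ |f n x|) →
      ‖∫ x in u..v, Complex.exp (Complex.I * f 0 x)‖ ≤ C * s := fun u v hau huv hvb hlow =>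
    hδs ▸ h.norm_integral_le_of_subset (fun k hk => hd k (by omega)) (hcont n le_rfl)
      (fun h1 => Or.inl (h1 ▸ hmonoF.mono Ioo_subset_Icc_self)) hau huv hvb hδ hlow
  have hmid : ‖∫ x in p..q, Complex.exp (Complex.I * f 0 x)‖ ≤ 2 * s := by
    refine (norm_integral_le_of_norm_le_const fun x _ =>
      (Complex.norm_exp_I_mul_ofReal _).le).trans ?_
    rw [one_mul, abs_of_nonneg (sub_nonneg.2 hpq)]
    exact le_of_mul_le_mul_left (by linarith) hc
  have hexp : ContinuousOn (fun x => Complex.exp (Complex.I * f 0 x)) (Icc a b) := by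
    have := hcont 0 n.zero_le
    fun_prop
  refine (norm_integral_le_add_add hexp hap hpq hqb (hpiece a p le_rfl hap (hpq.trans hqb) hleft)
    hmid (hpiece q b (hap.trans hpq) hqb le_rfl hright)).trans_eq (by ring)

lemma succ {n : ℕ} (h : VanDerCorputBound n C) (hn : 1 ≤ n) :
    VanDerCorputBound (n + 1) (2 * C + 2) := by
  intro f a b c hab hc hd hcont hlow _
  rcases forall_le_or_forall_le_neg_of_le_abs isPreconnected_Ioo
    (hcont.mono Ioo_subset_Icc_self) hc hlow with hpos | hneg
  · exact h.norm_integral_le_of_le_deriv hn hab hc hd hpos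
  · rw [← norm_integral_cexp_I_mul_neg]
    exact h.norm_integral_le_of_le_deriv hn (f := fun k x => -f k x) hab hc
      (fun k hk x hx => (hd k hk x hx).neg) hneg

end VanDerCorputBound

lemma vanDerCorputBound_one : VanDerCorputBound 1 2 := by
  intro f a b c hab hc hd hcont hlow hmono
  have hφ : ContinuousOn (f 0) (Icc a b) := fun x hx => (hd 0 one_pos x hx).continuousWithinAt
  have hφ' : ∀ x ∈ Ioo a b, HasDerivAt (f 0) (f 1 x) x := fun x hx =>
    (hd 0 one_pos x (Ioo_subset_Icc_self hx)).hasDerivAt (Icc_mem_nhds hx.1 hx.2)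
  rw [Nat.cast_one, div_one, Real.rpow_neg_one, ← div_eq_mul_inv]
  rcases forall_le_or_forall_le_neg_of_le_abs isPreconnected_Ioo
    (hcont.mono Ioo_subset_Icc_self) hc hlow with hpos | hneg
  · exact norm_integral_cexp_le_of_le_deriv_of_monotoneOn hab hc hφ hφ' hcont hpos (hmono rfl)
  · rw [← norm_integral_cexp_I_mul_neg]
    exact norm_integral_cexp_le_of_le_deriv_of_monotoneOn hab hc hφ.neg
      (fun x hx => (hφ' x hx).neg) hcont.neg hneg ((hmono rfl).symm.imp (·.neg) (·.neg))

theorem vanDerCorputBound {m : ℕ} (hm : 1 ≤ m) : VanDerCorputBound m (5 * 2 ^ (m - 1) - 2) := by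
  induction m, hm using Nat.le_induction with
  | base => exact vanDerCorputBound_one.mono (by norm_num)
  | succ n hn ih =>
    convert ih.succ hn using 1
    obtain ⟨k, rfl⟩ := Nat.exists_eq_add_of_le' hn
    simp only [Nat.add_sub_cancel, pow_succ]
    ring

lemma ContDiffOn.hasDerivWithinAt_iteratedDerivWithin {𝕜 F : Type*} [NontriviallyNormedField 𝕜]
    [NormedAddCommGroup F] [NormedSpace 𝕜 F] {f : 𝕜 → F} {s : Set 𝕜} {n k : ℕ}
    (hf : ContDiffOn 𝕜 n f s) (hs : UniqueDiffOn 𝕜 s) (hk : k < n) {x : 𝕜} (hx : x ∈ s) :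
    HasDerivWithinAt (iteratedDerivWithin k f s) (iteratedDerivWithin (k + 1) f s x) s x := by
  rw [iteratedDerivWithin_succ]
  exact (hf.differentiableOn_iteratedDerivWithin (by exact_mod_cast hk) hs x hx).hasDerivWithinAt

theorem norm_integral_cexp_le_of_contDiffOn {m : ℕ} (hm : 1 ≤ m) {φ : ℝ → ℝ} {a b c : ℝ}
    (hab : a < b) (hc : 0 < c) (hφ : ContDiffOn ℝ m φ (Icc a b))
    (hlow : ∀ x ∈ Ioo a b, c ≤ |iteratedDerivWithin m φ (Icc a b) x|)
    (hmono : m = 1 → MonotoneOn (derivWithin φ (Icc a b)) (Ioo a b) ∨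
      AntitoneOn (derivWithin φ (Icc a b)) (Ioo a b))
    {u v : ℝ} (hau : a ≤ u) (huv : u ≤ v) (hvb : v ≤ b) :
    ‖∫ x in u..v, Complex.exp (Complex.I * φ x)‖ ≤ (5 * 2 ^ (m - 1) - 2) * c ^ (-1 / (m : ℝ)) := by
  have hs := uniqueDiffOn_Icc hab
  simpa using (vanDerCorputBound hm).norm_integral_le_of_subset
    (f := fun k => iteratedDerivWithin k φ (Icc a b))
    (fun k hk x hx => hφ.hasDerivWithinAt_iteratedDerivWithin hs hk hx)
    (hφ.continuousOn_iteratedDerivWithin le_rfl hs) (by simpa [iteratedDerivWithin_one] using hmono)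
    hau huv hvb hc fun x hx => hlow x (Ioo_subset_Ioo hau hvb hx)

lemma norm_integral_mul_le_of_hasDerivAt {E ψ ψ' P : ℝ → ℂ} {a b K : ℝ} (hab : a ≤ b)
    (hP : ContinuousOn P (Icc a b)) (hPE : ∀ x ∈ Ioo a b, HasDerivAt P (E x) x)
    (hE : ContinuousOn E (Icc a b)) (hψ : ContinuousOn ψ (Icc a b))
    (hψ' : ∀ x ∈ Ioo a b, HasDerivAt ψ (ψ' x) x) (hψ'c : ContinuousOn ψ' (Icc a b))
    (hK : ∀ x ∈ Icc a b, ‖P x‖ ≤ K) :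
    ‖∫ x in a..b, E x * ψ x‖ ≤ ‖P b‖ * ‖ψ b‖ + ‖P a‖ * ‖ψ a‖ + K * ∫ x in a..b, ‖ψ' x‖ := by
  have hparts := integral_mul_deriv_eq_deriv_mul_of_hasDeriv_right (uIcc_of_le hab ▸ hψ)
    (uIcc_of_le hab ▸ hP)
    (fun x hx => (hψ' x (by simpa [hab] using hx)).hasDerivWithinAt)
    (fun x hx => (hPE x (by simpa [hab] using hx)).hasDerivWithinAt)
    (hψ'c.intervalIntegrable_of_Icc hab) (hE.intervalIntegrable_of_Icc hab)
  have hrest : ‖∫ x in a..b, ψ' x * P x‖ ≤ ∫ x in a..b, K * ‖ψ' x‖ :=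
    intervalIntegral.norm_integral_le_of_norm_le hab
      (ae_of_all _ fun x hx => by
        rw [norm_mul, mul_comm]
        exact mul_le_mul_of_nonneg_right (hK x (Ioc_subset_Icc_self hx)) (norm_nonneg _))
      ((hψ'c.norm.intervalIntegrable_of_Icc hab).const_mul K)
  simp_rw [mul_comm (E _)]
  rw [hparts, ← intervalIntegral.integral_const_mul]
  calc _ ≤ ‖ψ b * P b‖ + ‖ψ a * P a‖ + ‖∫ x in a..b, ψ' x * P x‖ :=
        norm_sub_le_of_le (norm_sub_le _ _) le_rfl
    _ ≤ _ := by rw [norm_mul, norm_mul, mul_comm ‖ψ b‖, mul_comm ‖ψ a‖]; linarith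

theorem norm_integral_mul_le_of_norm_integral_le {E ψ : ℝ → ℂ} {a b K : ℝ} (hab : a < b)
    (hE : ContinuousOn E (Icc a b)) (hψ : ContDiffOn ℝ 1 ψ (Icc a b))
    (hK : ∀ u ∈ Icc a b, ∀ v ∈ Icc a b, u ≤ v → ‖∫ x in u..v, E x‖ ≤ K) :
    ‖∫ x in a..b, E x * ψ x‖ ≤
      K * (min ‖ψ a‖ ‖ψ b‖ + ∫ x in a..b, ‖derivWithin ψ (Icc a b) x‖) := by
  have hψ' : ∀ x ∈ Ioo a b, HasDerivAt ψ (derivWithin ψ (Icc a b) x) x := fun x hx =>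
    (hψ.differentiableOn one_ne_zero x (Ioo_subset_Icc_self hx)).hasDerivWithinAt.hasDerivAt
      (Icc_mem_nhds hx.1 hx.2)
  have hparts := fun (P : ℝ → ℂ) hP hPE hPK => norm_integral_mul_le_of_hasDerivAt hab.le
    (P := P) (K := K) hP hPE hE hψ.continuousOn hψ'
    (hψ.continuousOn_derivWithin (uniqueDiffOn_Icc hab) le_rfl) hPK
  set P : ℝ → ℂ := fun x => ∫ t in a..x, E t
  have hEi : ∀ x ∈ Icc a b, IntervalIntegrable E volume a x := fun x hx =>
    (hE.mono (Icc_subset_Icc_right hx.2)).intervalIntegrable_of_Icc hx.1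
  have hPc : ContinuousOn P (Icc a b) := by
    have := continuousOn_primitive_interval (μ := volume) (a := a) (b := b) (f := E)
      (by rw [uIcc_of_le hab.le]; exact hE.integrableOn_Icc)
    rwa [uIcc_of_le hab.le] at this
  have hPE : ∀ x ∈ Ioo a b, HasDerivAt P (E x) x := fun x hx =>
    integral_hasDerivAt_right (hEi x (Ioo_subset_Icc_self hx))
      ((hE.mono Ioo_subset_Icc_self).stronglyMeasurableAtFilter isOpen_Ioo x hx)
      (hE.continuousAt (Icc_mem_nhds hx.1 hx.2))
  have hb : b ∈ Icc a b := right_mem_Icc.2 hab.le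
  have ha : a ∈ Icc a b := left_mem_Icc.2 hab.le
  have hPK : ∀ x ∈ Icc a b, ‖P x‖ ≤ K := fun x hx => hK a ha x hx hx.1
  have hPbK : ∀ x ∈ Icc a b, ‖P x - P b‖ ≤ K := fun x hx => by
    rw [norm_sub_rev, integral_interval_sub_left (hEi b hb) (hEi x hx)]
    exact hK x hx b hb hx.2
  rcases le_total ‖ψ a‖ ‖ψ b‖ with h | h
  · have := hparts (fun x => P x - P b) (hPc.sub continuousOn_const)
      (fun x hx => (hPE x hx).sub_const _) hPbK
    have := mul_le_mul_of_nonneg_right (hPbK a ha) (norm_nonneg (ψ a))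
    simp only [sub_self, norm_zero, zero_mul, zero_add, min_eq_left h] at *
    linarith
  · have := hparts P hPc hPE hPK
    have := mul_le_mul_of_nonneg_right (hPK b hb) (norm_nonneg (ψ b))
    simp only [P, integral_same, norm_zero, zero_mul, add_zero, min_eq_right h] at *
    linarith

/-- Van der Corput stationary phase lemma with explicit constants
(Stein, Harmonic Analysis, p. 334; Lemma 4.1). -/
theorem stmt_1
    (m : ℕ) (hm : 1 ≤ m) (a b : ℝ) (hab : a < b)
    (φ : ℝ → ℝ) (ψ : ℝ → ℂ) (cm : ℝ) (hcm : 0 < cm)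
    (hφ : ContDiffOn ℝ m φ (Set.Icc a b))
    (hφm : ∀ x ∈ Set.Ioo a b, cm ≤ |iteratedDerivWithin m φ (Set.Icc a b) x|)
    (hmono : m = 1 → (MonotoneOn (derivWithin φ (Set.Icc a b)) (Set.Ioo a b) ∨
        AntitoneOn (derivWithin φ (Set.Icc a b)) (Set.Ioo a b)))
    (hψ : ContDiffOn ℝ 1 ψ (Set.Icc a b))
    (μ : ℝ) (hμ : 0 < μ) :
    ‖∫ x in a..b, Complex.exp (Complex.I * ((μ * φ x : ℝ) : ℂ)) * ψ x‖ ≤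
      ((5 : ℝ) * 2 ^ (m - 1) - 2) * (cm * μ) ^ (-1 / (m : ℝ)) *
        (min ‖ψ a‖ ‖ψ b‖ + ∫ x in a..b, ‖derivWithin ψ (Set.Icc a b) x‖) := by
  have hlow : ∀ x ∈ Ioo a b, cm * μ ≤ |iteratedDerivWithin m (fun x => μ * φ x) (Icc a b) x| :=
    fun x hx => by
      rw [iteratedDerivWithin_const_mul_field, abs_mul, abs_of_pos hμ, mul_comm cm]
      exact mul_le_mul_of_nonneg_left (hφm x hx) hμ.le
  have hmonoμ : m = 1 → MonotoneOn (derivWithin (fun x => μ * φ x) (Icc a b)) (Ioo a b) ∨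
      AntitoneOn (derivWithin (fun x => μ * φ x) (Icc a b)) (Ioo a b) := fun h1 => by
    rw [show derivWithin (fun x => μ * φ x) (Icc a b) = fun x => μ * derivWithin φ (Icc a b) x
      from funext fun x => derivWithin_const_mul_field μ]
    exact (hmono h1).imp (fun h x hx y hy hxy => mul_le_mul_of_nonneg_left (h hx hy hxy) hμ.le)
      fun h x hx y hy hxy => mul_le_mul_of_nonneg_left (h hx hy hxy) hμ.le
  have hφc := hφ.continuousOn
  refine norm_integral_mul_le_of_norm_integral_le hab (by fun_prop) hψ fun u hu v hv huv => ?_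
  exact norm_integral_cexp_le_of_contDiffOn hm hab (mul_pos hcm hμ) (contDiffOn_const.mul hφ)
    hlow hmonoμ hu.1 huv hv.2
end

section
/- Let μ > 0, Q₀ ∈ ℝ and C > 0. Then there exists k₀ > 0 such that for every k ≥ k₀ and all real numbers e, e', e'' satisfying |e − k² − 2Q₀| ≤ C k^{-2}, |e' − 2k| ≤ C k^{-2}, and e'' ≥ 2(1 − 2Q₀ k^{-2}) − C k^{-3}, one has e'' > e'²/(2(e+μ)); in particular the equality e'' = e'²/(2(e+μ)) cannot hold. -/
/- With u = 1/k, the extreme admissible values make 2(e + μ)e'' - e'² equal to 4μ plus a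
polynomial in u without constant term (the k² and Q₀ contributions cancel), so it is positive
for large k; every admissible triple does at least as well as the extreme one. -/

open Filter

theorem sq_le_sq_add_of_abs_sub_le {x c r : ℝ} (hc : 0 ≤ c) (h : |x - c| ≤ r) :
    x ^ 2 ≤ (c + r) ^ 2 := by
  have hx : |x| ≤ c + r := by
    have := abs_sub_abs_le_abs_sub x c
    rw [abs_of_nonneg hc] at this
    linarith
  exact sq_le_sq.2 (hx.trans (le_abs_self _))

theorem sq_div_two_mul_lt {x y z a b l : ℝ} (hy : y ^ 2 ≤ b ^ 2) (hx : a ≤ x) (hz : l ≤ z)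
    (hl : 0 < l) (hbal : b ^ 2 < 2 * a * l) : y ^ 2 / (2 * x) < z := by
  have ha : 0 < a := pos_of_mul_pos_left (by nlinarith [sq_nonneg b]) hl.le
  rw [div_lt_iff₀ (by linarith)]
  calc y ^ 2 ≤ b ^ 2 := hy
    _ < 2 * a * l := hbal
    _ ≤ z * (2 * x) := by nlinarith

theorem eventually_lt_comp_inv_atTop {p : ℝ → ℝ} (hp : Continuous p) {c : ℝ} (hc : c < p 0) :
    ∀ᶠ k in atTop, c < p k⁻¹ :=
  ((hp.tendsto 0).comp tendsto_inv_atTop_zero).eventually_const_lt hc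

theorem eventually_lower_bound_pos (Q₀ C : ℝ) :
    ∀ᶠ k : ℝ in atTop, 0 < 2 * (1 - 2 * Q₀ / k ^ 2) - C / k ^ 3 := by
  filter_upwards [eventually_lt_comp_inv_atTop (p := fun u => 2 * (1 - 2 * Q₀ * u ^ 2) - C * u ^ 3)
    (c := 0) (by fun_prop) (by norm_num)] with k hk
  simpa [div_eq_mul_inv, inv_pow] using hk

theorem eventually_sq_lt_bounds (μ Q₀ C : ℝ) (hμ : 0 < μ) :
    ∀ᶠ k : ℝ in atTop, (2 * k + C / k ^ 2) ^ 2 <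
      2 * (k ^ 2 + 2 * Q₀ - C / k ^ 2 + μ) * (2 * (1 - 2 * Q₀ / k ^ 2) - C / k ^ 3) := by
  let gap : ℝ → ℝ := fun u => 4 * μ - 6 * C * u - (16 * Q₀ ^ 2 + 8 * Q₀ * μ + 4 * C) * u ^ 2
    - (4 * Q₀ * C + 2 * μ * C) * u ^ 3 + (8 * Q₀ * C - C ^ 2) * u ^ 4 + 2 * C ^ 2 * u ^ 5
  filter_upwards [eventually_lt_comp_inv_atTop (p := gap) (c := 0) (by fun_prop) (by simpa [gap]),
    eventually_ne_atTop 0] with k hgap hk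
  have : 2 * (k ^ 2 + 2 * Q₀ - C / k ^ 2 + μ) * (2 * (1 - 2 * Q₀ / k ^ 2) - C / k ^ 3)
      - (2 * k + C / k ^ 2) ^ 2 = gap k⁻¹ := by
    simp only [gap]
    field_simp
    ring
  linarith

theorem stmt_3_general (μ Q₀ C : ℝ) (hμ : 0 < μ) :
    ∃ k₀ : ℝ, 0 < k₀ ∧ ∀ k : ℝ, k₀ ≤ k → ∀ e e' e'' : ℝ,
      |e - k ^ 2 - 2 * Q₀| ≤ C / k ^ 2 →
      |e' - 2 * k| ≤ C / k ^ 2 →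
      2 * (1 - 2 * Q₀ / k ^ 2) - C / k ^ 3 ≤ e'' →
      e' ^ 2 / (2 * (e + μ)) < e'' := by
  obtain ⟨k₀, hk₀⟩ := eventually_atTop.1 <| (eventually_sq_lt_bounds μ Q₀ C hμ).and <|
    (eventually_lower_bound_pos Q₀ C).and (eventually_gt_atTop 0)
  refine ⟨max k₀ 1, by positivity, fun k hk e e' e'' he he' he'' => ?_⟩
  obtain ⟨hgap, hl, hk_pos⟩ := hk₀ k (le_of_max_le_left hk)
  exact sq_div_two_mul_lt (sq_le_sq_add_of_abs_sub_le (by positivity) he')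
    (by linarith [(abs_le.1 he).1]) he'' hl hgap

/-- High-energy incompatibility in the proof of Lemma 3.1: under the band
asymptotics, the equation E'' = E'²/(2(E+μ)) has no solutions for large k. -/
theorem stmt_3 (μ Q₀ C : ℝ) (hμ : 0 < μ) (hC : 0 < C) :
    ∃ k₀ : ℝ, 0 < k₀ ∧ ∀ k : ℝ, k₀ ≤ k → ∀ e e' e'' : ℝ,
      |e - k ^ 2 - 2 * Q₀| ≤ C / k ^ 2 →
      |e' - 2 * k| ≤ C / k ^ 2 →
      2 * (1 - 2 * Q₀ / k ^ 2) - C / k ^ 3 ≤ e'' →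
      e' ^ 2 / (2 * (e + μ)) < e'' :=
  stmt_3_general μ Q₀ C hμ
end
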